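/- arXiv:2409.11747 — 3 statements merged into one kernel-verified Lean document; each statement's English description precedes it below -/
import Mathlib

section
/- Let λ : ℝ≥0 → ℝ be the solution of the initial value problem λ'(t) = e^{-λ(t)} · Σ_{k=0}^{Δ-1} (λ(t)^k / k!) · q_{k+1} with λ(0) = 0, where q_k = Σ_{d≥k} p_d for a probability distribution (p_k)_{k≥2} on {2,3,...} supported on {2,...,Δ}. Then λ(t) → ∞ and λ'(t) → 0 as t → ∞. -/
open Filter MeasureTheory

/-!
The right-hand side is `Ψ(λ) = e^{-λ} Σ_{k<Δ} λ^k/k! · q_{k+1}`, the expectation of `q_{K+1}` over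
`K ~ Poisson(λ)` restricted to `K < Δ`. Since `Ψ(0) = q₁ = 1 > 0`, the solution can never cross
zero downwards, so `λ ≥ 0` on `[0, ∞)`. There `Ψ(λ) ≥ e^{-λ} q₁ = e^{-λ}`, i.e. `(e^λ)' ≥ 1`, whence
`λ(t) ≥ log (1 + t) → ∞`. Finally `Ψ` is `e^{-x}` times a polynomial, so `Ψ(λ(t)) → 0`.
-/

open Real

noncomputable def poissonWeightedSum (s : Finset ℕ) (c : ℕ → ℝ) (x : ℝ) : ℝ :=
  exp (-x) * ∑ k ∈ s, x ^ k / (Nat.factorial k : ℝ) * c k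

section PoissonWeightedSum

variable (s : Finset ℕ) (c : ℕ → ℝ)

theorem tendsto_poissonWeightedSum_atTop :
    Tendsto (poissonWeightedSum s c) atTop (nhds 0) := by
  have hterm : ∀ k ∈ s, Tendsto (fun x => x ^ k * exp (-x) * (c k / (Nat.factorial k : ℝ)))
      atTop (nhds 0) := fun k _ => by
    simpa using (tendsto_pow_mul_exp_neg_atTop_nhds_zero k).mul_const (c k / (Nat.factorial k : ℝ))
  convert tendsto_finsetSum s hterm using 1
  · ext x
    simp only [poissonWeightedSum, Finset.mul_sum]
    exact Finset.sum_congr rfl fun k _ => by ring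
  · simp

variable {s c}

theorem exp_neg_mul_le_poissonWeightedSum (hc : ∀ k, 0 ≤ c k) (hs : 0 ∈ s) {x : ℝ} (hx : 0 ≤ x) :
    exp (-x) * c 0 ≤ poissonWeightedSum s c x := by
  have hc0 : c 0 ≤ ∑ k ∈ s, x ^ k / (Nat.factorial k : ℝ) * c k := by
    simpa using Finset.single_le_sum (f := fun k => x ^ k / (Nat.factorial k : ℝ) * c k)
      (fun k _ => mul_nonneg (by positivity) (hc k)) hs
  exact mul_le_mul_of_nonneg_left hc0 (exp_pos _).le

end PoissonWeightedSum

theorem nonneg_of_hasDerivAt_autonomous {F f : ℝ → ℝ} (hF : 0 < F 0)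
    (hf : ∀ t, HasDerivAt f (F (f t)) t) {a : ℝ} (ha : 0 ≤ f a) {t : ℝ} (ht : a ≤ t) :
    0 ≤ f t := by
  have hf' : ∀ t, HasDerivAt (fun t => -f t) (-F (f t)) t := fun t => (hf t).neg
  have := image_le_of_deriv_right_lt_deriv_boundary (a := a) (b := t) (B := fun _ => 0) (B' := 0)
    (fun x _ => (hf' x).continuousAt.continuousWithinAt) (fun x _ => (hf' x).hasDerivWithinAt)
    (neg_nonpos.mpr ha) (fun _ => hasDerivAt_const _ _)
    (fun x _ hx => by simpa [neg_eq_zero.mp hx] using hF) ⟨ht, le_rfl⟩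
  simpa using this

section ExpNegLeDeriv

variable {f f' : ℝ → ℝ} (hf : ∀ t, HasDerivAt f (f' t) t)
  (hbound : ∀ t, 0 ≤ t → exp (-f t) ≤ f' t)
include hf hbound

theorem exp_add_le_exp_of_exp_neg_le_deriv {t : ℝ} (ht : 0 ≤ t) :
    exp (f 0) + t ≤ exp (f t) := by
  have hexp : ∀ t, HasDerivAt (fun t => exp (f t)) (exp (f t) * f' t) t := fun t => (hf t).exp
  have hline : ∀ x, HasDerivAt (fun x => exp (f 0) + x) 1 x := fun x =>
    (hasDerivAt_id x).const_add _
  have := image_le_of_deriv_right_le_deriv_boundary (a := 0) (b := t)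
    (fun x _ => (hline x).continuousAt.continuousWithinAt) (fun x _ => (hline x).hasDerivWithinAt)
    (by simp) (fun x _ => (hexp x).continuousAt.continuousWithinAt)
    (fun x _ => (hexp x).hasDerivWithinAt)
    (fun x hx => calc
      (1 : ℝ) = exp (f x) * exp (-f x) := by rw [← exp_add, add_neg_cancel, exp_zero]
      _ ≤ exp (f x) * f' x := mul_le_mul_of_nonneg_left (hbound x hx.1) (exp_pos _).le)
    ⟨ht, le_rfl⟩
  simpa using this

theorem tendsto_atTop_of_exp_neg_le_deriv : Tendsto f atTop atTop := by
  have hlog : ∀ t, 0 ≤ t → log (exp (f 0) + t) ≤ f t := fun t ht => by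
    rw [log_le_iff_le_exp (by positivity)]
    exact exp_add_le_exp_of_exp_neg_le_deriv hf hbound ht
  refine tendsto_atTop_mono' atTop (eventually_atTop.2 ⟨0, hlog⟩) ?_
  exact tendsto_log_atTop.comp (tendsto_atTop_add_const_left atTop _ tendsto_id)

end ExpNegLeDeriv

/-- For the IVP λ'(t) = e^{-λ(t)} Σ_{k=0}^{Δ-1} (λ(t)^k/k!) q_{k+1}, λ(0) = 0,
where q_k = Σ_{d≥k} p_d for a probability distribution (p_k) supported on {2,...,Δ},
the solution satisfies λ(t) → ∞ and λ'(t) → 0 as t → ∞. -/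
theorem stmt1 (Δ : ℕ) (hΔ : 2 ≤ Δ) (p q : ℕ → ℝ)
    (hp0 : ∀ k, 0 ≤ p k)
    (hsupp : ∀ k, k < 2 ∨ Δ < k → p k = 0)
    (hsum : ∑ k ∈ Finset.Icc 2 Δ, p k = 1)
    (hq : ∀ k, q k = ∑ d ∈ Finset.Icc k Δ, p d)
    (lam : ℝ → ℝ) (hlam0 : lam 0 = 0)
    (hode : ∀ t, HasDerivAt lam
      (Real.exp (-(lam t)) *
        ∑ k ∈ Finset.range Δ, lam t ^ k / (Nat.factorial k : ℝ) * q (k + 1)) t) :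
    Tendsto lam atTop atTop ∧
    Tendsto (fun t => Real.exp (-(lam t)) *
        ∑ k ∈ Finset.range Δ, lam t ^ k / (Nat.factorial k : ℝ) * q (k + 1))
      atTop (nhds 0) := by
  set Ψ := poissonWeightedSum (Finset.range Δ) (fun k => q (k + 1))
  have hq0 : ∀ k, 0 ≤ q (k + 1) := fun k => by
    rw [hq]; exact Finset.sum_nonneg fun d _ => hp0 d
  have hq1 : q 1 = 1 := by
    rw [hq 1, ← Finset.add_sum_Ioc_eq_sum_Icc (by omega), hsupp 1 (Or.inl one_lt_two),
      ← Finset.Icc_add_one_left_eq_Ioc]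
    simp only [zero_add, Nat.reduceAdd, hsum]
  have hΨ : ∀ x, 0 ≤ x → exp (-x) ≤ Ψ x := fun x hx => by
    simpa [hq1] using exp_neg_mul_le_poissonWeightedSum hq0 (by simp; omega) hx
  have hnonneg : ∀ t, 0 ≤ t → 0 ≤ lam t := fun t =>
    nonneg_of_hasDerivAt_autonomous ((exp_pos _).trans_le (hΨ 0 le_rfl)) hode hlam0.ge
  have hlam := tendsto_atTop_of_exp_neg_le_deriv hode fun t ht => hΨ _ (hnonneg t ht)
  exact ⟨hlam, (tendsto_poissonWeightedSum_atTop _ _).comp hlam⟩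
end

section
/- Let λ solve λ'(t) = e^{-λ(t)} Σ_{k=0}^{Δ-1} (λ(t)^k/k!) q_{k+1}, λ(0)=0, and define f(t) := -λ''(t). Then f(t) = λ'(t) e^{-λ(t)} Σ_{k=0}^{Δ-1} (λ(t)^k/k!) p_{k+1}, f is nonnegative, and ∫_0^∞ f(t) dt = 1, i.e., f is a probability density function on ℝ≥0. -/
/-!
Write `G(x) = e^{-x} ∑_{k<Δ} q_{k+1} x^k / k!`, so that `λ' = G ∘ λ`. Differentiating the
truncated exponential series shifts the coefficients, and `q_{k+1} - q_{k+2} = p_{k+1}` turns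
`G'(x)` into `-e^{-x} ∑_{k<Δ} p_{k+1} x^k / k!`; the chain rule then gives the formula for
`f = -λ''`. Since `λ' = G(0) = q_1 = 1` wherever `λ = 0`, the solution never becomes negative on
`[0, ∞)`, so `(e^λ)' = e^{λ} λ' ≥ q_1` there: hence `λ → ∞`, `λ' = G(λ) → 0`, and
`∫_0^∞ f = λ'(0) - lim λ' = 1`.
-/

open Filter MeasureTheory Topology Set Finset Nat

noncomputable def truncExpSum (n : ℕ) (c : ℕ → ℝ) (x : ℝ) : ℝ :=
  ∑ k ∈ range n, x ^ k / (k ! : ℝ) * c k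

section

variable {n : ℕ} {c : ℕ → ℝ}

lemma truncExpSum_zero_right (hn : 0 < n) : truncExpSum n c 0 = c 0 := by
  rw [truncExpSum, Finset.sum_eq_single_of_mem 0 (mem_range.2 hn)]
  · simp
  · intro k _ hk; simp [zero_pow hk]

lemma truncExpSum_nonneg (hc : ∀ k, 0 ≤ c k) {x : ℝ} (hx : 0 ≤ x) :
    0 ≤ truncExpSum n c x :=
  sum_nonneg fun k _ => by have := hc k; positivity

lemma le_truncExpSum (hn : 0 < n) (hc : ∀ k, 0 ≤ c k) {x : ℝ} (hx : 0 ≤ x) :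
    c 0 ≤ truncExpSum n c x := by
  have h := single_le_sum (f := fun k => x ^ k / (k ! : ℝ) * c k)
    (fun k _ => by have := hc k; positivity) (mem_range.2 hn)
  rw [truncExpSum]
  simpa using h

lemma truncExpSum_succ_of_eq_zero (hc : c n = 0) (x : ℝ) :
    truncExpSum (n + 1) c x = truncExpSum n c x := by
  simp [truncExpSum, sum_range_succ, hc]

lemma truncExpSum_sub (d : ℕ → ℝ) (x : ℝ) :
    truncExpSum n c x - truncExpSum n d x = truncExpSum n (fun k => c k - d k) x := by
  simp only [truncExpSum, ← sum_sub_distrib, mul_sub]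

lemma hasDerivAt_truncExpSum_succ (x : ℝ) :
    HasDerivAt (truncExpSum (n + 1) c) (truncExpSum n (fun k => c (k + 1)) x) x := by
  have hderiv : HasDerivAt (truncExpSum (n + 1) c)
      (∑ k ∈ range (n + 1), k * x ^ (k - 1) / (k ! : ℝ) * c k) x :=
    HasDerivAt.fun_sum fun k _ => by
      simpa using ((hasDerivAt_pow k x).div_const (k ! : ℝ)).mul_const (c k)
  convert hderiv using 1
  rw [sum_range_succ', truncExpSum]
  simp only [CharP.cast_eq_zero, zero_mul, zero_div, add_zero, Nat.add_sub_cancel]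
  refine sum_congr rfl fun k _ => ?_
  rw [factorial_succ, cast_mul, cast_succ]
  field_simp

lemma hasDerivAt_truncExpSum (hc : c n = 0) (x : ℝ) :
    HasDerivAt (truncExpSum n c) (truncExpSum n (fun k => c (k + 1)) x) x := by
  cases n with
  | zero =>
    simp only [truncExpSum, range_zero, sum_empty]
    exact hasDerivAt_const x 0
  | succ m =>
    rw [truncExpSum_succ_of_eq_zero (c := fun k => c (k + 1)) hc]
    exact hasDerivAt_truncExpSum_succ x

-- `poissonSum n c x` is `𝔼[c N; N < n]` for `N ∼ Poisson(x)`.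
noncomputable def poissonSum (n : ℕ) (c : ℕ → ℝ) (x : ℝ) : ℝ :=
  Real.exp (-x) * truncExpSum n c x

lemma hasDerivAt_poissonSum (hc : c n = 0) (x : ℝ) :
    HasDerivAt (poissonSum n c) (-poissonSum n (fun k => c k - c (k + 1)) x) x := by
  have hexp : HasDerivAt (fun x => Real.exp (-x)) (-Real.exp (-x)) x := by
    simpa using (hasDerivAt_neg x).exp
  refine (hexp.mul (hasDerivAt_truncExpSum hc x)).congr_deriv ?_
  rw [poissonSum, ← truncExpSum_sub]
  ring

lemma poissonSum_zero_right (hn : 0 < n) : poissonSum n c 0 = c 0 := by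
  rw [poissonSum, neg_zero, Real.exp_zero, one_mul, truncExpSum_zero_right hn]

lemma poissonSum_nonneg (hc : ∀ k, 0 ≤ c k) {x : ℝ} (hx : 0 ≤ x) : 0 ≤ poissonSum n c x :=
  mul_nonneg (Real.exp_pos _).le (truncExpSum_nonneg hc hx)

lemma tendsto_poissonSum_atTop (n : ℕ) (c : ℕ → ℝ) :
    Tendsto (poissonSum n c) atTop (𝓝 0) := by
  have h := tendsto_finsetSum (range n) fun k _ =>
    (Real.tendsto_pow_mul_exp_neg_atTop_nhds_zero k).mul_const (c k / (k ! : ℝ))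
  simp only [zero_mul, sum_const_zero] at h
  refine h.congr fun x => ?_
  rw [poissonSum, truncExpSum, mul_sum]
  exact sum_congr rfl fun k _ => by ring

end

lemma sum_Icc_eq_add_sum_Icc_succ {M : Type*} [AddCommMonoid M] {p : ℕ → M} {Δ : ℕ}
    (hp : ∀ k, Δ < k → p k = 0) (k : ℕ) :
    ∑ d ∈ Icc k Δ, p d = p k + ∑ d ∈ Icc (k + 1) Δ, p d := by
  rcases le_or_gt k Δ with hk | hk
  · rw [← add_sum_Ioc_eq_sum_Icc hk, Finset.Icc_add_one_left_eq_Ioc]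
  · simp [hp k hk, Finset.Icc_eq_empty_of_lt hk, Finset.Icc_eq_empty_of_lt (lt_succ_of_lt hk)]

lemma nonneg_of_hasDerivAt_pos_of_eq_zero {u u' : ℝ → ℝ} {a : ℝ}
    (hu : ∀ t, HasDerivAt u (u' t) t) (ha : 0 ≤ u a) (hpos : ∀ t, u t = 0 → 0 < u' t)
    {t : ℝ} (ht : a ≤ t) : 0 ≤ u t := by
  have hcont : Continuous u := continuous_iff_continuousAt.2 fun t => (hu t).continuousAt
  have h := image_le_of_deriv_right_lt_deriv_boundary' (f := fun t => -u t) (B := fun _ => 0)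
    hcont.neg.continuousOn (fun x _ => (hu x).neg.hasDerivWithinAt) (neg_nonpos.2 ha)
    continuousOn_const (fun x _ => hasDerivWithinAt_const x _ 0)
    (fun x _ hx => neg_neg_of_pos (hpos x (neg_eq_zero.1 hx))) ⟨ht, le_rfl⟩
  exact neg_nonpos.1 h

lemma tendsto_atTop_of_le_deriv_mul_exp {u u' : ℝ → ℝ} {a ε : ℝ} (hε : 0 < ε)
    (hu : ∀ t, HasDerivAt u (u' t) t) (hgrowth : ∀ t, a < t → ε ≤ u' t * Real.exp (u t)) :
    Tendsto u atTop atTop := by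
  have hderiv (t : ℝ) :
      HasDerivAt (fun t => Real.exp (u t) - ε * t) (Real.exp (u t) * u' t - ε * 1) t :=
    (hu t).exp.sub ((hasDerivAt_id t).const_mul ε)
  have hmono : MonotoneOn (fun t => Real.exp (u t) - ε * t) (Ici a) := by
    refine monotoneOn_of_hasDerivWithinAt_nonneg (convex_Ici a)
      (fun t _ => (hderiv t).continuousAt.continuousWithinAt)
      (fun t _ => (hderiv t).hasDerivWithinAt) fun t ht => ?_
    rw [interior_Ici] at ht
    linarith [hgrowth t ht, mul_comm (u' t) (Real.exp (u t))]
  have hexp : Tendsto (fun t => Real.exp (u t)) atTop atTop := by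
    refine tendsto_atTop_mono' atTop ?_ (tendsto_atTop_add_const_right atTop
      (Real.exp (u a) - ε * a) (tendsto_id.const_mul_atTop hε))
    filter_upwards [eventually_ge_atTop a] with t ht
    have h := hmono self_mem_Ici (mem_Ici.2 ht) ht
    simp only [id] at h ⊢
    linarith
  simpa [Function.comp_def] using Real.tendsto_log_atTop.comp hexp

lemma integral_Ioi_eq_of_hasDerivAt_neg {g f : ℝ → ℝ} {a : ℝ}
    (hg : ∀ t, HasDerivAt g (-f t) t) (hf : ∀ t, a < t → 0 ≤ f t)
    (hlim : Tendsto g atTop (𝓝 0)) : ∫ t in Ioi a, f t = g a := by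
  have h := integral_Ioi_of_hasDerivAt_of_nonneg (g := fun t => -g t)
    (hg a).continuousAt.neg.continuousWithinAt
    (fun t _ => (hg t).neg.congr_deriv (neg_neg _)) hf (by simpa using hlim.neg)
  simpa using h

section

variable {n : ℕ} {c : ℕ → ℝ} {lam lam' : ℝ → ℝ}

lemma nonneg_of_hasDerivAt_poissonSum (hn : 0 < n) (hc0 : 0 < c 0)
    (hode : ∀ t, HasDerivAt lam (lam' t) t) (hlam' : ∀ t, lam' t = poissonSum n c (lam t))
    {a t : ℝ} (ha : 0 ≤ lam a) (ht : a ≤ t) : 0 ≤ lam t :=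
  nonneg_of_hasDerivAt_pos_of_eq_zero hode ha (fun t h0 => by
    rwa [hlam', h0, poissonSum_zero_right hn]) ht

lemma tendsto_atTop_of_hasDerivAt_poissonSum (hn : 0 < n) (hc : ∀ k, 0 ≤ c k) (hc0 : 0 < c 0)
    (hode : ∀ t, HasDerivAt lam (lam' t) t) (hlam' : ∀ t, lam' t = poissonSum n c (lam t))
    {a : ℝ} (ha : 0 ≤ lam a) : Tendsto lam atTop atTop :=
  tendsto_atTop_of_le_deriv_mul_exp hc0 hode fun t ht => by
    rw [hlam', poissonSum, mul_comm (Real.exp _), mul_assoc, ← Real.exp_add, neg_add_cancel,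
      Real.exp_zero, mul_one]
    exact le_truncExpSum hn hc (nonneg_of_hasDerivAt_poissonSum hn hc0 hode hlam' ha ht.le)

end

/-- With λ solving the IVP and f(t) := -λ''(t), we have
f(t) = λ'(t) e^{-λ(t)} Σ_{k=0}^{Δ-1} (λ(t)^k/k!) p_{k+1}, f ≥ 0, and ∫_0^∞ f = 1. -/
theorem stmt2 (Δ : ℕ) (hΔ : 2 ≤ Δ) (p q : ℕ → ℝ)
    (hp0 : ∀ k, 0 ≤ p k)
    (hsupp : ∀ k, k < 2 ∨ Δ < k → p k = 0)
    (hsum : ∑ k ∈ Finset.Icc 2 Δ, p k = 1)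
    (hq : ∀ k, q k = ∑ d ∈ Finset.Icc k Δ, p d)
    (lam lam' f : ℝ → ℝ) (hlam0 : lam 0 = 0)
    (hode : ∀ t, HasDerivAt lam (lam' t) t)
    (hlam' : ∀ t, lam' t = Real.exp (-(lam t)) *
        ∑ k ∈ Finset.range Δ, lam t ^ k / (Nat.factorial k : ℝ) * q (k + 1))
    (hf : ∀ t, HasDerivAt lam' (-(f t)) t) :
    (∀ t, 0 ≤ t → f t = lam' t * Real.exp (-(lam t)) *
        ∑ k ∈ Finset.range Δ, lam t ^ k / (Nat.factorial k : ℝ) * p (k + 1)) ∧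
    (∀ t, 0 ≤ t → 0 ≤ f t) ∧
    (∫ t in Set.Ioi (0 : ℝ), f t) = 1 := by
  have hlam'G : lam' = poissonSum Δ (fun k => q (k + 1)) ∘ lam := funext hlam'
  have hpq (k : ℕ) : q k - q (k + 1) = p k := by
    rw [hq, hq, sum_Icc_eq_add_sum_Icc_succ (fun k hk => hsupp k (Or.inr hk)) k]
    ring
  have hq1 : q 1 = 1 := by linarith [hpq 1, hq 2, hsupp 1 (Or.inl one_lt_two)]
  have hqΔ : q (Δ + 1) = 0 := by rw [hq, Finset.Icc_eq_empty (by omega), sum_empty]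
  have hq_nonneg (k : ℕ) : 0 ≤ q k := by rw [hq]; exact sum_nonneg fun d _ => hp0 d
  have hfeq (t : ℝ) : f t = lam' t * poissonSum Δ (fun k => p (k + 1)) (lam t) := by
    have h := (hasDerivAt_poissonSum (c := fun k => q (k + 1)) hqΔ (lam t)).comp t (hode t)
    simp only [hpq, ← hlam'G] at h
    linear_combination -(hf t).unique h
  have hf_nonneg (t : ℝ) (ht : 0 ≤ t) : 0 ≤ f t := by
    have hx := nonneg_of_hasDerivAt_poissonSum (by omega) (hq1 ▸ one_pos) hode hlam' hlam0.ge ht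
    rw [hfeq, hlam'G]
    exact mul_nonneg (poissonSum_nonneg (fun k => hq_nonneg (k + 1)) hx)
      (poissonSum_nonneg (fun k => hp0 (k + 1)) hx)
  have hlam_tendsto := tendsto_atTop_of_hasDerivAt_poissonSum (by omega)
    (fun k => hq_nonneg (k + 1)) (hq1 ▸ one_pos) hode hlam' hlam0.ge
  have hlam'_tendsto : Tendsto lam' atTop (𝓝 0) :=
    hlam'G ▸ (tendsto_poissonSum_atTop Δ _).comp hlam_tendsto
  have hlam'_zero : lam' 0 = 1 := by
    rw [hlam'G, Function.comp_apply, hlam0, poissonSum_zero_right (by omega), hq1]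
  refine ⟨fun t _ => (hfeq t).trans (mul_assoc _ _ _).symm, hf_nonneg, ?_⟩
  rw [integral_Ioi_eq_of_hasDerivAt_neg hf (fun t ht => hf_nonneg t ht.le) hlam'_tendsto,
    hlam'_zero]
end

section
/- Define H(t) := λ'(t) e^{-λ(t)} Σ_{k=0}^∞ (λ(t)^k/k!) p_{k+2}, where λ solves the IVP above and (p_k) is a probability distribution on {2,...,Δ} with p_k = 0 for k ∉ [2,Δ]. Then H(t) = d/dt [ 1 - e^{-λ(t)} Σ_{k=0}^∞ (λ(t)^k/k!) q_{k+2} ], H is nonnegative, 0 ≤ H(t) ≤ 1 for all t ≥ 0, and ∫_0^∞ H(s) ds = 1. -/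
/-!
For `c : ℕ → ℝ` put `F c x = e^{-x} ∑ₖ xᵏ/k! cₖ`, the mean of `c` under a Poisson law of
parameter `x`. Differentiating the series term by term gives `(F c)' = -F (c - c(· + 1))`, and
`qₖ - qₖ₊₁ = pₖ`, so the chain rule turns `1 - F (q(· + 2)) ∘ λ` into `H`. For `0 ≤ c ≤ 1` and
`x ≥ 0` we have `0 ≤ F c x ≤ 1`, which bounds both `λ' = F (q(· + 1)) ∘ λ` and `H / λ'` once
`λ ≥ 0`; and `λ` cannot become negative since `λ' = q₁ = 1` wherever `λ = 0`. Finally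
`(e^λ)' = ∑ₖ λᵏ/k! qₖ₊₁ ≥ 1`, so `e^λ ≥ 1 + t` and `λ → ∞`; as `F` of a finitely supported
sequence tends to `0`, the integral of `H` is `lim (1 - F ∘ λ) - (1 - F (λ 0)) = 1 - 0`.
-/

open Filter MeasureTheory Finset Real Nat Topology

section PoissonWeightedSums

variable {c : ℕ → ℝ}

theorem hasDerivAt_sum_range_pow_div_factorial_mul (c : ℕ → ℝ) (n : ℕ) (x : ℝ) :
    HasDerivAt (fun y => ∑ k ∈ range (n + 1), y ^ k / k ! * c k)
      (∑ k ∈ range n, x ^ k / k ! * c (k + 1)) x := by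
  induction n with
  | zero => simpa using hasDerivAt_const x (c 0)
  | succ n ih =>
    have hterm : HasDerivAt (fun y => y ^ (n + 1) / (n + 1)! * c (n + 1))
        (x ^ n / n ! * c (n + 1)) x := by
      refine (((hasDerivAt_pow (n + 1) x).div_const _).mul_const _).congr_deriv ?_
      rw [factorial_succ]
      push_cast
      field_simp
    rw [sum_range_succ _ n]
    simp_rw [sum_range_succ _ (n + 1)]
    exact ih.fun_add hterm

theorem summable_pow_div_factorial_mul_of_eq_zero {n : ℕ} (hc : ∀ k, n ≤ k → c k = 0) (x : ℝ) :
    Summable fun k => x ^ k / k ! * c k :=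
  summable_of_ne_finset_zero (s := range n) fun k hk => by
    rw [hc k (by simpa using hk), mul_zero]

theorem tsum_pow_div_factorial_mul_eq_sum_range {n : ℕ} (hc : ∀ k, n ≤ k → c k = 0) (x : ℝ) :
    ∑' k, x ^ k / k ! * c k = ∑ k ∈ range n, x ^ k / k ! * c k :=
  tsum_eq_sum fun k hk => by rw [hc k (by simpa using hk), mul_zero]

theorem hasDerivAt_tsum_pow_div_factorial_mul {n : ℕ} (hc : ∀ k, n < k → c k = 0) (x : ℝ) :
    HasDerivAt (fun y => ∑' k, y ^ k / k ! * c k) (∑' k, x ^ k / k ! * c (k + 1)) x := by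
  simp only [tsum_pow_div_factorial_mul_eq_sum_range (n := n + 1) (fun k hk => hc k hk),
    tsum_pow_div_factorial_mul_eq_sum_range (n := n) (c := fun k => c (k + 1))
      (fun k hk => hc (k + 1) (by omega))]
  exact hasDerivAt_sum_range_pow_div_factorial_mul c n x

theorem hasDerivAt_exp_neg_mul_tsum_pow_div_factorial_mul {n : ℕ} (hc : ∀ k, n < k → c k = 0)
    (x : ℝ) :
    HasDerivAt (fun y => exp (-y) * ∑' k, y ^ k / k ! * c k)
      (-(exp (-x) * ∑' k, x ^ k / k ! * (c k - c (k + 1)))) x := by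
  have hsum := fun (d : ℕ → ℝ) (hd : ∀ k, n + 1 ≤ k → d k = 0) =>
    summable_pow_div_factorial_mul_of_eq_zero hd x
  have hexp : HasDerivAt (fun y => exp (-y)) (-exp (-x)) x := by
    simpa using (hasDerivAt_neg x).exp
  refine (hexp.fun_mul (hasDerivAt_tsum_pow_div_factorial_mul hc x)).congr_deriv ?_
  simp only [mul_sub]
  rw [Summable.tsum_sub (hsum _ fun k hk => hc k (by omega))
    (hsum _ fun k hk => hc (k + 1) (by omega))]
  ring

theorem hasDerivAt_one_sub_exp_neg_mul_tsum_pow_div_factorial_mul_comp {n : ℕ}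
    (hc : ∀ k, n < k → c k = 0) {f : ℝ → ℝ} {f' t : ℝ} (hf : HasDerivAt f f' t) :
    HasDerivAt (fun s => 1 - exp (-f s) * ∑' k, f s ^ k / k ! * c k)
      (f' * exp (-f t) * ∑' k, f t ^ k / k ! * (c k - c (k + 1))) t := by
  refine (((hasDerivAt_exp_neg_mul_tsum_pow_div_factorial_mul hc (f t)).comp t hf).const_sub 1)
    |>.congr_deriv ?_
  ring

theorem tsum_zero_pow_div_factorial_mul (c : ℕ → ℝ) : ∑' k, (0 : ℝ) ^ k / k ! * c k = c 0 := by
  rw [tsum_eq_single 0 fun k hk => by simp [zero_pow hk]]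
  simp

theorem summable_pow_div_factorial_mul_of_nonneg_of_le_one (hc0 : ∀ k, 0 ≤ c k)
    (hc1 : ∀ k, c k ≤ 1) {x : ℝ} (hx : 0 ≤ x) : Summable fun k => x ^ k / k ! * c k :=
  (summable_pow_div_factorial x).of_nonneg_of_le (fun k => by have := hc0 k; positivity)
    fun k => mul_le_of_le_one_right (by positivity) (hc1 k)

theorem exp_neg_mul_tsum_pow_div_factorial_mul_le_one (hc0 : ∀ k, 0 ≤ c k)
    (hc1 : ∀ k, c k ≤ 1) {x : ℝ} (hx : 0 ≤ x) : exp (-x) * ∑' k, x ^ k / k ! * c k ≤ 1 := by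
  have hle : ∑' k, x ^ k / k ! * c k ≤ exp x := by
    rw [exp_eq_exp_ℝ, NormedSpace.exp_eq_tsum_div]
    exact (summable_pow_div_factorial_mul_of_nonneg_of_le_one hc0 hc1 hx).tsum_le_tsum
      (fun k => mul_le_of_le_one_right (by positivity) (hc1 k)) (summable_pow_div_factorial x)
  calc exp (-x) * ∑' k, x ^ k / k ! * c k ≤ exp (-x) * exp x := by gcongr
    _ = 1 := by rw [← exp_add, neg_add_cancel, exp_zero]

theorem tendsto_exp_neg_mul_tsum_pow_div_factorial_mul_atTop_nhds_zero {n : ℕ}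
    (hc : ∀ k, n ≤ k → c k = 0) :
    Tendsto (fun x => exp (-x) * ∑' k, x ^ k / k ! * c k) atTop (𝓝 0) := by
  simp only [tsum_pow_div_factorial_mul_eq_sum_range hc, mul_sum]
  rw [show (0 : ℝ) = ∑ k ∈ range n, c k / k ! * 0 by simp]
  refine tendsto_finsetSum _ fun k _ => ?_
  convert (tendsto_pow_mul_exp_neg_atTop_nhds_zero k).const_mul (c k / k !) using 2 with x
  ring

end PoissonWeightedSums

section TailSums

variable {Δ : ℕ} {p q : ℕ → ℝ}

theorem tail_eq_zero (hq : ∀ k, q k = ∑ d ∈ Icc k Δ, p d) {k : ℕ} (hk : Δ < k) : q k = 0 := by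
  rw [hq, Icc_eq_empty (by omega), sum_empty]

theorem tail_eq_add_tail_succ (hp : ∀ k, Δ < k → p k = 0)
    (hq : ∀ k, q k = ∑ d ∈ Icc k Δ, p d) (k : ℕ) : q k = p k + q (k + 1) := by
  rcases le_or_gt k Δ with hk | hk
  · rw [hq, hq, ← insert_Icc_add_one_left_eq_Icc hk, sum_insert (by simp)]
  · rw [tail_eq_zero hq hk, tail_eq_zero hq (by omega), hp k hk, add_zero]

theorem tail_nonneg (hp0 : ∀ k, 0 ≤ p k) (hq : ∀ k, q k = ∑ d ∈ Icc k Δ, p d) (k : ℕ) :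
    0 ≤ q k := by
  rw [hq]
  exact sum_nonneg fun d _ => hp0 d

theorem tail_antitone (hp0 : ∀ k, 0 ≤ p k) (hp : ∀ k, Δ < k → p k = 0)
    (hq : ∀ k, q k = ∑ d ∈ Icc k Δ, p d) : Antitone q :=
  antitone_nat_of_succ_le fun k => by
    rw [tail_eq_add_tail_succ hp hq k]
    exact le_add_of_nonneg_left (hp0 k)

end TailSums

structure IsPoissonODESolution (c : ℕ → ℝ) (lam lam' : ℝ → ℝ) : Prop where
  zero : lam 0 = 0
  hasDerivAt : ∀ t, HasDerivAt lam (lam' t) t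
  deriv_eq : ∀ t, lam' t = exp (-lam t) * ∑' k, lam t ^ k / k ! * c k

namespace IsPoissonODESolution

variable {c : ℕ → ℝ} {lam lam' : ℝ → ℝ}

theorem nonneg (h : IsPoissonODESolution c lam lam') (hc : 0 < c 0) {t : ℝ} (ht : 0 ≤ t) :
    0 ≤ lam t := by
  refine image_le_of_deriv_right_lt_deriv_boundary (f' := fun _ => 0) continuousOn_const
    (fun x _ => hasDerivWithinAt_const x _ 0) h.zero.ge h.hasDerivAt ?_ ⟨ht, le_rfl⟩
  intro x _ hx
  rwa [h.deriv_eq, ← hx, neg_zero, exp_zero, one_mul, tsum_zero_pow_div_factorial_mul]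

theorem deriv_nonneg (h : IsPoissonODESolution c lam lam') (hc0 : ∀ k, 0 ≤ c k) {t : ℝ}
    (ht : 0 ≤ lam t) : 0 ≤ lam' t := by
  rw [h.deriv_eq]
  exact mul_nonneg (exp_nonneg _) (tsum_nonneg fun k => mul_nonneg (by positivity) (hc0 k))

theorem deriv_le_one (h : IsPoissonODESolution c lam lam') (hc0 : ∀ k, 0 ≤ c k)
    (hc1 : ∀ k, c k ≤ 1) {t : ℝ} (ht : 0 ≤ lam t) : lam' t ≤ 1 :=
  h.deriv_eq t ▸ exp_neg_mul_tsum_pow_div_factorial_mul_le_one hc0 hc1 ht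

theorem one_add_le_exp (h : IsPoissonODESolution c lam lam') (hc0 : ∀ k, 0 ≤ c k)
    (hc1 : ∀ k, c k ≤ 1) (hc : 1 ≤ c 0) {t : ℝ} (ht : 0 ≤ t) : 1 + t ≤ exp (lam t) := by
  have hderiv : ∀ x, HasDerivAt (fun s => exp (lam s)) (∑' k, lam x ^ k / k ! * c k) x := by
    intro x
    refine ((h.hasDerivAt x).exp).congr_deriv ?_
    rw [h.deriv_eq, ← mul_assoc, ← exp_add, add_neg_cancel, exp_zero, one_mul]
  have hgrowth := (convex_Ici (0 : ℝ)).mul_sub_le_image_sub_of_le_deriv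
    (fun x _ => (hderiv x).continuousAt.continuousWithinAt)
    (fun x _ => (hderiv x).differentiableAt.differentiableWithinAt) (C := 1) ?_
    0 Set.self_mem_Ici t ht ht
  · rw [h.zero, exp_zero] at hgrowth
    linarith
  intro x hx
  have hlam : 0 ≤ lam x := h.nonneg (by linarith) (interior_subset hx)
  rw [(hderiv x).deriv]
  calc (1 : ℝ) ≤ lam x ^ 0 / (0 ! : ℕ) * c 0 := by simpa using hc
    _ ≤ ∑' k, lam x ^ k / k ! * c k :=
      (summable_pow_div_factorial_mul_of_nonneg_of_le_one hc0 hc1 hlam).le_tsum 0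
        fun k _ => mul_nonneg (by positivity) (hc0 k)

theorem tendsto_atTop (h : IsPoissonODESolution c lam lam') (hc0 : ∀ k, 0 ≤ c k)
    (hc1 : ∀ k, c k ≤ 1) (hc : 1 ≤ c 0) : Tendsto lam atTop atTop := by
  refine tendsto_atTop_mono' atTop ?_
    (tendsto_log_atTop.comp (tendsto_atTop_add_const_left _ 1 tendsto_id))
  filter_upwards [eventually_ge_atTop 0] with t ht
  rw [Function.comp_apply, id, log_le_iff_le_exp (by linarith)]
  exact h.one_add_le_exp hc0 hc1 hc ht

theorem mul_exp_neg_mul_tsum_mem_Icc (h : IsPoissonODESolution c lam lam') (hc0 : ∀ k, 0 ≤ c k)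
    (hc1 : ∀ k, c k ≤ 1) {d : ℕ → ℝ} (hd0 : ∀ k, 0 ≤ d k) (hd1 : ∀ k, d k ≤ 1) {t : ℝ}
    (ht : 0 ≤ lam t) :
    lam' t * exp (-lam t) * ∑' k, lam t ^ k / k ! * d k ∈ Set.Icc 0 1 := by
  have hd : 0 ≤ exp (-lam t) * ∑' k, lam t ^ k / k ! * d k :=
    mul_nonneg (exp_nonneg _) (tsum_nonneg fun k => mul_nonneg (by positivity) (hd0 k))
  rw [mul_assoc]
  exact ⟨mul_nonneg (h.deriv_nonneg hc0 ht) hd, mul_le_one₀ (h.deriv_le_one hc0 hc1 ht) hd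
    (exp_neg_mul_tsum_pow_div_factorial_mul_le_one hd0 hd1 ht)⟩

end IsPoissonODESolution

theorem stmt4_general (Δ : ℕ) (p q : ℕ → ℝ)
    (hp0 : ∀ k, 0 ≤ p k)
    (hsupp : ∀ k, k < 2 ∨ Δ < k → p k = 0)
    (hsum : ∑ k ∈ Finset.Icc 2 Δ, p k = 1)
    (hq : ∀ k, q k = ∑ d ∈ Finset.Icc k Δ, p d)
    (lam lam' : ℝ → ℝ) (hlam0 : lam 0 = 0)
    (hode : ∀ t, HasDerivAt lam (lam' t) t)
    (hlam' : ∀ t, lam' t = Real.exp (-(lam t)) *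
        ∑ k ∈ Finset.range Δ, lam t ^ k / (Nat.factorial k : ℝ) * q (k + 1))
    (H : ℝ → ℝ)
    (hH : ∀ t, H t = lam' t * Real.exp (-(lam t)) *
        ∑' k : ℕ, lam t ^ k / (Nat.factorial k : ℝ) * p (k + 2)) :
    (∀ t, 0 ≤ t → HasDerivAt
        (fun s => 1 - Real.exp (-(lam s)) * ∑' k : ℕ, lam s ^ k / (Nat.factorial k : ℝ) * q (k + 2))
        (H t) t) ∧
    (∀ t, 0 ≤ t → 0 ≤ H t ∧ H t ≤ 1) ∧
    (∫ s in Set.Ioi (0 : ℝ), H s) = 1 := by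
  have hp : ∀ k, Δ < k → p k = 0 := fun k hk => hsupp k (Or.inr hk)
  have hq_succ := tail_eq_add_tail_succ hp hq
  have hq_sub_succ : ∀ k, q k - q (k + 1) = p k := fun k => by rw [hq_succ k, add_sub_cancel_right]
  have hq2 : q 2 = 1 := (hq 2).trans hsum
  have hq1 : q 1 = 1 := by rw [hq_succ, hsupp 1 (by omega), hq2, zero_add]
  have hq0 : q 0 = 1 := by rw [hq_succ, hsupp 0 (by omega), hq1, zero_add]
  have hq_nonneg := tail_nonneg hp0 hq
  have hq_le_one : ∀ k, q k ≤ 1 := fun k => hq0 ▸ tail_antitone hp0 hp hq (Nat.zero_le k)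
  have hp_le_one : ∀ k, p k ≤ 1 := fun k =>
    hq_sub_succ k ▸ (sub_le_self _ (hq_nonneg _)).trans (hq_le_one k)
  have hsol : IsPoissonODESolution (fun k => q (k + 1)) lam lam' := ⟨hlam0, hode, fun t => by
    rw [hlam', tsum_pow_div_factorial_mul_eq_sum_range (n := Δ)
      fun k hk => tail_eq_zero hq (by omega)]⟩
  have hF : ∀ t, HasDerivAt
      (fun s => 1 - exp (-lam s) * ∑' k, lam s ^ k / k ! * q (k + 2)) (H t) t := by
    intro t
    convert hasDerivAt_one_sub_exp_neg_mul_tsum_pow_div_factorial_mul_comp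
      (c := fun k => q (k + 2)) (n := Δ) (fun k hk => tail_eq_zero hq (by omega)) (hode t) using 1
    simp only [hq_sub_succ, hH]
  have hH_mem : ∀ t, 0 ≤ t → 0 ≤ H t ∧ H t ≤ 1 := fun t ht => hH t ▸
    hsol.mul_exp_neg_mul_tsum_mem_Icc (fun k => hq_nonneg _) (fun k => hq_le_one _)
      (fun k => hp0 _) (fun k => hp_le_one _) (hsol.nonneg (by simp [hq1]) ht)
  refine ⟨fun t _ => hF t, hH_mem, ?_⟩
  rw [integral_Ioi_of_hasDerivAt_of_nonneg' (fun t _ => hF t) (fun t ht => (hH_mem t ht.le).1)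
    (l := 1) ?_]
  · simp [hlam0, tsum_zero_pow_div_factorial_mul, hq2]
  simpa using ((tendsto_exp_neg_mul_tsum_pow_div_factorial_mul_atTop_nhds_zero (n := Δ)
    fun k hk => tail_eq_zero hq (by omega)).comp
      (hsol.tendsto_atTop (fun k => hq_nonneg _) (fun k => hq_le_one _) hq1.ge)).const_sub 1

/-- For H(t) := λ'(t) e^{-λ(t)} Σ_{k≥0} (λ(t)^k/k!) p_{k+2}:
H(t) = d/dt [1 - e^{-λ(t)} Σ_{k≥0} (λ(t)^k/k!) q_{k+2}], 0 ≤ H(t) ≤ 1, and ∫_0^∞ H = 1. -/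
theorem stmt4 (Δ : ℕ) (hΔ : 2 ≤ Δ) (p q : ℕ → ℝ)
    (hp0 : ∀ k, 0 ≤ p k)
    (hsupp : ∀ k, k < 2 ∨ Δ < k → p k = 0)
    (hsum : ∑ k ∈ Finset.Icc 2 Δ, p k = 1)
    (hq : ∀ k, q k = ∑ d ∈ Finset.Icc k Δ, p d)
    (lam lam' : ℝ → ℝ) (hlam0 : lam 0 = 0)
    (hode : ∀ t, HasDerivAt lam (lam' t) t)
    (hlam' : ∀ t, lam' t = Real.exp (-(lam t)) *
        ∑ k ∈ Finset.range Δ, lam t ^ k / (Nat.factorial k : ℝ) * q (k + 1))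
    (H : ℝ → ℝ)
    (hH : ∀ t, H t = lam' t * Real.exp (-(lam t)) *
        ∑' k : ℕ, lam t ^ k / (Nat.factorial k : ℝ) * p (k + 2)) :
    (∀ t, 0 ≤ t → HasDerivAt
        (fun s => 1 - Real.exp (-(lam s)) * ∑' k : ℕ, lam s ^ k / (Nat.factorial k : ℝ) * q (k + 2))
        (H t) t) ∧
    (∀ t, 0 ≤ t → 0 ≤ H t ∧ H t ≤ 1) ∧
    (∫ s in Set.Ioi (0 : ℝ), H s) = 1 :=
  stmt4_general Δ p q hp0 hsupp hsum hq lam lam' hlam0 hode hlam' H hH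
end
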